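/- arXiv:2309.14009 — 10 statements merged into one kernel-verified Lean document; each statement's English description precedes it below -/
import Mathlib

section
/- The CADI-CADI discount function satisfies the time interval CADI condition: for all t, T₁, T₂, T₃ and all ρ, if F(t,T₁)/F(t,T₂) = F(t,T₂)/F(t,T₃), then F(t,T₁+ρ)/F(t,T₂+ρ) = F(t,T₂+ρ)/F(t,T₃+ρ). -/
theorem cadi_cadi_time_interval_CADI (r δ γ : ℝ) (hr : 0 < r) (hδ : 0 < δ) (hγ : γ ≠ 0)
    (F : ℝ → ℝ → ℝ)
    (hF : ∀ t T, F t T = Real.exp (-r * Real.exp (-δ * t) * (1 - Real.exp (-γ * T)) / γ))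
    (t T₁ T₂ T₃ ρ : ℝ) (hT₁ : 0 ≤ T₁) (hT₂ : 0 ≤ T₂) (hT₃ : 0 ≤ T₃)
    (hT₁ρ : 0 ≤ T₁ + ρ) (hT₂ρ : 0 ≤ T₂ + ρ) (hT₃ρ : 0 ≤ T₃ + ρ)
    (h : F t T₁ / F t T₂ = F t T₂ / F t T₃) :
    F t (T₁ + ρ) / F t (T₂ + ρ) = F t (T₂ + ρ) / F t (T₃ + ρ) := by
  simp only [hF, ← Real.exp_sub] at h ⊢
  have h' := Real.exp_injective h
  have hne : r * Real.exp (-δ * t) / γ ≠ 0 :=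
    div_ne_zero (by positivity) hγ
  have key : Real.exp (-γ * T₁) + Real.exp (-γ * T₃) = 2 * Real.exp (-γ * T₂) := by
    have h2 : r * Real.exp (-δ * t) / γ *
        (Real.exp (-γ * T₁) + Real.exp (-γ * T₃) - 2 * Real.exp (-γ * T₂)) = 0 := by
      linear_combination h'
    rcases mul_eq_zero.mp h2 with h3 | h3
    · exact absurd h3 hne
    · linarith
  congr 1
  have e : ∀ T : ℝ, Real.exp (-γ * (T + ρ)) = Real.exp (-γ * T) * Real.exp (-γ * ρ) := by
    intro T; rw [← Real.exp_add]; ring_nf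
  rw [e, e, e]
  linear_combination (r * Real.exp (-δ * t) * Real.exp (-γ * ρ) / γ) * key
end

section
/- The CADI-CADI discount function satisfies the delay CADI condition: for all T, t₁, t₂, t₃ and all σ, if F(t₁,T)/F(t₂,T) = F(t₂,T)/F(t₃,T), then F(t₁+σ,T)/F(t₂+σ,T) = F(t₂+σ,T)/F(t₃+σ,T). -/
/-! Writing `F t T = exp (g t)` with `g t = c · exp (-δ t)`, the ratio condition says that
`g t₁, g t₂, g t₃` are in arithmetic progression. A delay by `σ` multiplies `g` by the constant
`exp (-δ σ)`, and scaling preserves arithmetic progressions. -/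

open Real

theorem exp_div_exp_eq_exp_div_exp_iff {a b c : ℝ} :
    exp a / exp b = exp b / exp c ↔ a - b = b - c := by
  rw [← exp_sub, ← exp_sub, exp_eq_exp]

theorem exp_div_exp_shift_eq_of_map_add_eq_mul {g : ℝ → ℝ} {k σ t₁ t₂ t₃ : ℝ}
    (hg : ∀ t, g (t + σ) = k * g t)
    (h : exp (g t₁) / exp (g t₂) = exp (g t₂) / exp (g t₃)) :
    exp (g (t₁ + σ)) / exp (g (t₂ + σ)) = exp (g (t₂ + σ)) / exp (g (t₃ + σ)) := by
  rw [exp_div_exp_eq_exp_div_exp_iff] at h ⊢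
  rw [hg, hg, hg]
  linear_combination k * h

theorem cadi_cadi_delay_CADI_general (r δ γ : ℝ)
    (F : ℝ → ℝ → ℝ)
    (hF : ∀ t T, F t T = Real.exp (-r * Real.exp (-δ * t) * (1 - Real.exp (-γ * T)) / γ))
    (T t₁ t₂ t₃ σ : ℝ)
    (h : F t₁ T / F t₂ T = F t₂ T / F t₃ T) :
    F (t₁ + σ) T / F (t₂ + σ) T = F (t₂ + σ) T / F (t₃ + σ) T := by
  simp only [hF] at h ⊢
  refine exp_div_exp_shift_eq_of_map_add_eq_mul
    (g := fun t => -r * exp (-δ * t) * (1 - exp (-γ * T)) / γ) (k := exp (-δ * σ)) (fun t => ?_) h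
  rw [mul_add, exp_add]
  ring

theorem cadi_cadi_delay_CADI (r δ γ : ℝ) (hr : 0 < r) (hδ : 0 < δ) (hγ : γ ≠ 0)
    (F : ℝ → ℝ → ℝ)
    (hF : ∀ t T, F t T = Real.exp (-r * Real.exp (-δ * t) * (1 - Real.exp (-γ * T)) / γ))
    (T t₁ t₂ t₃ σ : ℝ)
    (h : F t₁ T / F t₂ T = F t₂ T / F t₃ T) :
    F (t₁ + σ) T / F (t₂ + σ) T = F (t₂ + σ) T / F (t₃ + σ) T :=
  cadi_cadi_delay_CADI_general r δ γ F hF T t₁ t₂ t₃ σ h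
end

section
/- The CADI-CADI discount function satisfies the weak total delay CADI condition: for all t₁, t₂, T₁, T₂ and all σ, if F(t₁,T₁) = F(t₂,T₂) then F(t₁+σ,T₁) = F(t₂+σ,T₂). -/
/-! Since `log F (t + σ) T = exp (-δ * σ) * log F t T`, the delayed value `F (t + σ) T` is a
function of `F t T` alone, so equal values stay equal after a common delay. -/

open Real

lemma cadi_exponent_add_delay (r δ γ t T σ : ℝ) :
    -r * exp (-δ * (t + σ)) * (1 - exp (-γ * T)) / γ
      = exp (-δ * σ) * (-r * exp (-δ * t) * (1 - exp (-γ * T)) / γ) := by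
  rw [mul_add, exp_add]
  ring

theorem cadi_cadi_weak_total_delay_CADI_general (r δ γ : ℝ)
    (F : ℝ → ℝ → ℝ)
    (hF : ∀ t T, F t T = Real.exp (-r * Real.exp (-δ * t) * (1 - Real.exp (-γ * T)) / γ))
    (t₁ t₂ T₁ T₂ σ : ℝ)
    (h : F t₁ T₁ = F t₂ T₂) :
    F (t₁ + σ) T₁ = F (t₂ + σ) T₂ := by
  have delay : ∀ t T, F (t + σ) T = exp (exp (-δ * σ) * log (F t T)) := by
    intro t T
    rw [hF, hF, log_exp, cadi_exponent_add_delay]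
  rw [delay, delay, h]

theorem cadi_cadi_weak_total_delay_CADI (r δ γ : ℝ) (hr : 0 < r) (hδ : 0 < δ) (hγ : γ ≠ 0)
    (F : ℝ → ℝ → ℝ)
    (hF : ∀ t T, F t T = Real.exp (-r * Real.exp (-δ * t) * (1 - Real.exp (-γ * T)) / γ))
    (t₁ t₂ T₁ T₂ σ : ℝ)
    (h : F t₁ T₁ = F t₂ T₂) :
    F (t₁ + σ) T₁ = F (t₂ + σ) T₂ :=
  cadi_cadi_weak_total_delay_CADI_general r δ γ F hF t₁ t₂ T₁ T₂ σ h
end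

section
/- The CRDI-CRDI discount function F(t,T) = exp(-r·t^α·T^{β+1}/(β+1)) with r > 0, α < 0, β > -1 satisfies the weak total delay CRDI condition: for all t₁, t₂ > 0, T₁, T₂ ≥ 0 and σ > 0, if F(t₁,T₁) = F(t₂,T₂) then F(t₁·σ,T₁) = F(t₂·σ,T₂). -/
theorem crdi_crdi_weak_total_delay_CRDI (r α β : ℝ) (hr : 0 < r) (hα : α < 0) (hβ : -1 < β)
    (F : ℝ → ℝ → ℝ)
    (hF : ∀ t T, F t T = Real.exp (-r * t ^ α * T ^ (β + 1) / (β + 1)))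
    (t₁ t₂ T₁ T₂ σ : ℝ) (ht₁ : 0 < t₁) (ht₂ : 0 < t₂) (hT₁ : 0 ≤ T₁) (hT₂ : 0 ≤ T₂) (hσ : 0 < σ)
    (h : F t₁ T₁ = F t₂ T₂) :
    F (t₁ * σ) T₁ = F (t₂ * σ) T₂ := by
  rw [hF, hF] at h ⊢
  have h' := Real.exp_injective h
  congr 1
  rw [Real.mul_rpow ht₁.le hσ.le, Real.mul_rpow ht₂.le hσ.le,
    show -r * (t₁ ^ α * σ ^ α) * T₁ ^ (β + 1) / (β + 1)
      = σ ^ α * (-r * t₁ ^ α * T₁ ^ (β + 1) / (β + 1)) from by ring,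
    show -r * (t₂ ^ α * σ ^ α) * T₂ ^ (β + 1) / (β + 1)
      = σ ^ α * (-r * t₂ ^ α * T₂ ^ (β + 1) / (β + 1)) from by ring, h']
end

section
/- If a twice-differentiable function φ : ℝ → ℝ with φ > 0 and (log φ)' never zero satisfies the constant Prelec measure condition -(log φ)''/(log φ)' = k for a constant k ≠ 0, then there exist constants a ≠ 0 and b > 0 such that φ(x) = b·exp(-(a/k)·e^{-kx}) for all x. -/
/-! The Prelec condition says that `(log φ)'` solves `y' = -k y`, so `(log φ)' = a e^{-kx}` with
`a = (log φ)'(0) ≠ 0`; integrating once more, `log φ = log b - (a / k) e^{-kx}`. -/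

open Real

lemma eq_mul_exp_of_hasDerivAt_mul_self {f : ℝ → ℝ} {c : ℝ}
    (hf : ∀ x, HasDerivAt f (c * f x) x) (x : ℝ) : f x = f 0 * exp (c * x) := by
  have hderiv : ∀ y, HasDerivAt (fun y => f y * exp (-c * y)) 0 y := fun y =>
    ((hf y).fun_mul ((hasDerivAt_id y).const_mul (-c)).exp).congr_deriv (by simp only [id]; ring)
  have hconst : f x * exp (-c * x) = f 0 := by
    simpa using is_const_of_deriv_eq_zero (fun y => (hderiv y).differentiableAt)
      (fun y => (hderiv y).deriv) x 0
  calc f x = f x * exp (-c * x) * exp (c * x) := by rw [mul_assoc, ← exp_add]; simp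
    _ = f 0 * exp (c * x) := by rw [hconst]

lemma eq_add_div_mul_exp_of_hasDerivAt {g : ℝ → ℝ} {a c : ℝ} (hc : c ≠ 0)
    (hg : ∀ x, HasDerivAt g (a * exp (c * x)) x) (x : ℝ) :
    g x = g 0 - a / c + a / c * exp (c * x) := by
  have hderiv : ∀ y, HasDerivAt (fun y => g y - a / c * exp (c * y)) 0 y := fun y =>
    ((hg y).fun_sub (((hasDerivAt_id y).const_mul c).exp.const_mul (a / c))).congr_deriv
      (by field_simp; simp)
  have hconst := is_const_of_deriv_eq_zero (fun y => (hderiv y).differentiableAt)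
    (fun y => (hderiv y).deriv) x 0
  simp only [mul_zero, exp_zero, mul_one] at hconst
  linarith

theorem constant_prelec_measure_CADI_general (φ : ℝ → ℝ) (hφpos : ∀ x, 0 < φ x)
    (k : ℝ) (hk : k ≠ 0)
    (g : ℝ → ℝ) (hg : g = Real.log ∘ φ)
    (hg1 : Differentiable ℝ g) (hg2 : Differentiable ℝ (deriv g))
    (hgne : ∀ x, deriv g x ≠ 0)
    (hprelec : ∀ x, deriv (deriv g) x = -k * deriv g x) :
    ∃ a b : ℝ, a ≠ 0 ∧ 0 < b ∧
      ∀ x, φ x = b * Real.exp (-(a / k) * Real.exp (-k * x)) := by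
  set a := deriv g 0
  have hg' : ∀ x, deriv g x = a * exp (-k * x) :=
    eq_mul_exp_of_hasDerivAt_mul_self fun x => hprelec x ▸ (hg2 x).hasDerivAt
  have hg_eq : ∀ x, g x = g 0 - a / -k + a / -k * exp (-k * x) :=
    eq_add_div_mul_exp_of_hasDerivAt (neg_ne_zero.2 hk) fun x => hg' x ▸ (hg1 x).hasDerivAt
  refine ⟨a, exp (g 0 + a / k), hgne 0, exp_pos _, fun x => ?_⟩
  have hφx : φ x = exp (g x) := by rw [hg, Function.comp_apply, exp_log (hφpos x)]
  rw [hφx, hg_eq x, ← exp_add]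
  congr 1
  ring

theorem constant_prelec_measure_CADI (φ : ℝ → ℝ) (hφpos : ∀ x, 0 < φ x)
    (hφ : ∀ x, DifferentiableAt ℝ φ x)
    (k : ℝ) (hk : k ≠ 0)
    (g : ℝ → ℝ) (hg : g = Real.log ∘ φ)
    (hg1 : Differentiable ℝ g) (hg2 : Differentiable ℝ (deriv g))
    (hgne : ∀ x, deriv g x ≠ 0)
    (hprelec : ∀ x, deriv (deriv g) x = -k * deriv g x) :
    ∃ a b : ℝ, a ≠ 0 ∧ 0 < b ∧
      ∀ x, φ x = b * Real.exp (-(a / k) * Real.exp (-k * x)) :=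
  constant_prelec_measure_CADI_general φ hφpos k hk g hg hg1 hg2 hgne hprelec
end

section
/- If a twice-differentiable function φ : (0,∞) → ℝ with φ > 0 satisfies the constant relative Prelec measure condition -x·(log φ)''(x)/(log φ)'(x) = h for all x > 0 with constant h ≠ 1 (and (log φ)' never zero), then there exist constants a ≠ 0 and b > 0 such that φ(x) = b·exp(a·x^{1-h}/(1-h)) for all x > 0. -/
lemma const_on_Ioi_aux (f : ℝ → ℝ)
    (hd : ∀ x ∈ Set.Ioi (0:ℝ), DifferentiableAt ℝ f x)
    (h0 : ∀ x ∈ Set.Ioi (0:ℝ), deriv f x = 0)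
    {x y : ℝ} (hx : x ∈ Set.Ioi (0:ℝ)) (hy : y ∈ Set.Ioi (0:ℝ)) : f x = f y := by
  have := Convex.norm_image_sub_le_of_norm_deriv_le (C := 0) hd
    (fun z hz => by simp [h0 z hz]) (convex_Ioi 0) hx hy
  simpa [sub_eq_zero, eq_comm] using this

theorem constant_relative_prelec_measure_CRDI (φ : ℝ → ℝ) (hφpos : ∀ x > (0:ℝ), 0 < φ x)
    (hφ : ∀ x > (0:ℝ), DifferentiableAt ℝ φ x)
    (h : ℝ) (hh : h ≠ 1)
    (g : ℝ → ℝ) (hg : g = Real.log ∘ φ)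
    (hg1 : ∀ x > (0:ℝ), DifferentiableAt ℝ g x)
    (hg2 : ∀ x > (0:ℝ), DifferentiableAt ℝ (deriv g) x)
    (hgne : ∀ x > (0:ℝ), deriv g x ≠ 0)
    (hprelec : ∀ x > (0:ℝ), x * deriv (deriv g) x = -h * deriv g x) :
    ∃ a b : ℝ, a ≠ 0 ∧ 0 < b ∧
      ∀ x > (0:ℝ), φ x = b * Real.exp (a * x ^ (1 - h) / (1 - h)) := by
  set a : ℝ := deriv g 1 with ha
  have h1h : (1 : ℝ) - h ≠ 0 := sub_ne_zero.mpr (Ne.symm hh)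
  -- Step 1: F x = deriv g x * x ^ h is constant on Ioi 0
  set F : ℝ → ℝ := fun x => deriv g x * x ^ h with hF
  have hFderiv : ∀ x ∈ Set.Ioi (0:ℝ), HasDerivAt F 0 x := by
    intro x hx
    have hx0 : (0:ℝ) < x := hx
    have h1 : HasDerivAt (deriv g) (deriv (deriv g) x) x := (hg2 x hx0).hasDerivAt
    have h2 : HasDerivAt (fun x : ℝ => x ^ h) (h * x ^ (h - 1)) x :=
      Real.hasDerivAt_rpow_const (Or.inl hx0.ne')
    have hD := h1.mul h2
    have key : deriv (deriv g) x * x ^ h + deriv g x * (h * x ^ (h - 1)) = 0 := by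
      have hp := hprelec x hx0
      have hxh : x ^ h = x * x ^ (h - 1) := by
        rw [show h = 1 + (h - 1) by ring, Real.rpow_add hx0, Real.rpow_one]
        ring_nf
      rw [hxh]
      have h4 := congrArg (fun t => t * x ^ (h - 1)) hp
      ring_nf at h4 ⊢
      linarith
    exact key ▸ hD
  have hFconst : ∀ x ∈ Set.Ioi (0:ℝ), F x = a := by
    intro x hx
    have := const_on_Ioi_aux F (fun z hz => (hFderiv z hz).differentiableAt)
      (fun z hz => (hFderiv z hz).deriv) hx (Set.mem_Ioi.mpr one_pos)
    simpa [hF, ha] using this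
  have ha0 : a ≠ 0 := by simpa [ha] using hgne 1 one_pos
  -- deriv g x = a * x ^ (-h)
  have hderivg : ∀ x ∈ Set.Ioi (0:ℝ), deriv g x = a * x ^ (-h) := by
    intro x hx
    have hx0 : (0:ℝ) < x := hx
    have := hFconst x hx
    have hne : x ^ h ≠ 0 := (Real.rpow_pos_of_pos hx0 h).ne'
    rw [Real.rpow_neg hx0.le]
    field_simp
    linarith [this]
  -- Step 2: G x = g x - a * x^(1-h)/(1-h) is constant
  set G : ℝ → ℝ := fun x => g x - a * x ^ (1 - h) / (1 - h) with hG
  have hGderiv : ∀ x ∈ Set.Ioi (0:ℝ), HasDerivAt G 0 x := by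
    intro x hx
    have hx0 : (0:ℝ) < x := hx
    have h1 : HasDerivAt g (deriv g x) x := (hg1 x hx0).hasDerivAt
    have h2 : HasDerivAt (fun x : ℝ => x ^ (1 - h)) ((1 - h) * x ^ (1 - h - 1)) x :=
      Real.hasDerivAt_rpow_const (Or.inl hx0.ne')
    have h3 := h1.sub (((h2.const_mul a).div_const (1 - h)))
    have key : deriv g x - a * ((1 - h) * x ^ (1 - h - 1)) / (1 - h) = 0 := by
      rw [hderivg x hx]
      have : (1 : ℝ) - h - 1 = -h := by ring
      rw [this]
      field_simp
      ring
    exact key ▸ h3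
  have hGconst : ∀ x ∈ Set.Ioi (0:ℝ), G x = G 1 := by
    intro x hx
    exact const_on_Ioi_aux G (fun z hz => (hGderiv z hz).differentiableAt)
      (fun z hz => (hGderiv z hz).deriv) hx (Set.mem_Ioi.mpr one_pos)
  refine ⟨a, Real.exp (G 1), ha0, Real.exp_pos _, fun x hx => ?_⟩
  have hgx : g x = G 1 + a * x ^ (1 - h) / (1 - h) := by
    have := hGconst x hx
    simp only [hG] at this
    linarith
  have : Real.exp (g x) = φ x := by
    rw [hg]; exact Real.exp_log (hφpos x hx)
  rw [← this, hgx, Real.exp_add]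
end

section
/- The CRDI-CRDI discount function F(t,T) = exp(-r·t^α·T^{β+1}/(β+1)) has constant relative Prelec measures: -t·∂²ₜ(log F)/∂ₜ(log F) = 1-α > 1 and -T·∂²_T(log F)/∂_T(log F) = -β < 1, for all t > 0, T > 0. -/
private lemma d1 (c p : ℝ) {t : ℝ} (ht : 0 < t) :
    deriv (fun s : ℝ => c * s ^ p) t = c * (p * t ^ (p - 1)) :=
  ((Real.hasDerivAt_rpow_const (x := t) (p := p) (Or.inl ht.ne')).const_mul c).deriv

private lemma key (c p : ℝ) (hc : c ≠ 0) (hp : p ≠ 0) {t : ℝ} (ht : 0 < t) :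
    -t * deriv (deriv (fun s : ℝ => c * s ^ p)) t /
      deriv (fun s : ℝ => c * s ^ p) t = 1 - p := by
  have ev : deriv (fun s : ℝ => c * s ^ p) =ᶠ[nhds t]
      fun s => (c * p) * s ^ (p - 1) := by
    filter_upwards [eventually_gt_nhds ht] with s hs
    rw [d1 c p hs]; ring
  have h2 : deriv (deriv (fun s : ℝ => c * s ^ p)) t
      = (c * p) * ((p - 1) * t ^ (p - 1 - 1)) := by
    rw [ev.deriv_eq, d1 (c * p) (p - 1) ht]
  rw [h2, d1 c p ht]
  have htp : t ^ (p - 1) = t ^ (p - 1 - 1) * t := by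
    rw [← Real.rpow_add_one ht.ne']; ring_nf
  have h0 : t ^ (p - 1 - 1) ≠ 0 := (Real.rpow_pos_of_pos ht _).ne'
  rw [htp]
  field_simp
  ring

theorem crdi_crdi_constant_relative_prelec_measures (r α β : ℝ)
    (hr : 0 < r) (hα : α < 0) (hβ : -1 < β)
    (F : ℝ → ℝ → ℝ)
    (hF : ∀ t T, F t T = Real.exp (-r * t ^ α * T ^ (β + 1) / (β + 1))) :
    ∀ t > (0:ℝ), ∀ T > (0:ℝ),
      (-t * deriv (deriv (fun s => Real.log (F s T))) t /
        deriv (fun s => Real.log (F s T)) t = 1 - α ∧ 1 < 1 - α) ∧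
      (-T * deriv (deriv (fun S => Real.log (F t S))) T /
        deriv (fun S => Real.log (F t S)) T = -β ∧ -β < 1) := by
  intro t ht T hT
  have hβ1 : (0:ℝ) < β + 1 := by linarith
  have hTp : (0:ℝ) < T ^ (β + 1) := Real.rpow_pos_of_pos hT _
  have htp : (0:ℝ) < t ^ α := Real.rpow_pos_of_pos ht _
  have e1 : (fun s => Real.log (F s T)) =
      fun s : ℝ => (-r * T ^ (β + 1) / (β + 1)) * s ^ α := by
    funext s; rw [hF, Real.log_exp]; ring
  have e2 : (fun S => Real.log (F t S)) =
      fun S : ℝ => (-r * t ^ α / (β + 1)) * S ^ (β + 1) := by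
    funext S; rw [hF, Real.log_exp]; ring
  constructor
  · refine ⟨?_, by linarith⟩
    rw [e1, key _ _ ?_ hα.ne ht]
    have : -r * T ^ (β + 1) < 0 := by nlinarith
    exact div_ne_zero this.ne hβ1.ne'
  · constructor
    · have := key (-r * t ^ α / (β + 1)) (β + 1)
        (div_ne_zero (by nlinarith : -r * t ^ α < 0).ne hβ1.ne') (by linarith) hT
      rw [e2, this]; ring
    · linarith
end

section
/- Functional equation splitting (CADI-CADI case): if g, a : ℝ → ℝ and c : ℝ → ℝ with g > 0, a > 0, and c(t) > 0 for all t, and there exists a constant c̄ < 0 such that g(t)·(e^{-c(t)·T} - 1) = -a(T)·e^{c̄·t} for all t ≥ 0 and T > 0, then there exist constants k > 0 and c̃ > 0 such that g(t) = k·e^{c̄·t} and c(t) = c̃ for all t. -/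
theorem functional_splitting_cadi_cadi (g a c : ℝ → ℝ) (cbar : ℝ) (hcbar : cbar < 0)
    (hg : ∀ t ≥ (0:ℝ), 0 < g t) (hc : ∀ t ≥ (0:ℝ), 0 < c t)
    (ha : ∀ T > (0:ℝ), 0 < a T)
    (heq : ∀ t ≥ (0:ℝ), ∀ T > (0:ℝ),
      g t * (Real.exp (-(c t) * T) - 1) = -(a T) * Real.exp (cbar * t)) :
    ∃ k > (0:ℝ), ∃ ctil > (0:ℝ),
      ∀ t ≥ (0:ℝ), g t = k * Real.exp (cbar * t) ∧ c t = ctil := by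
  refine ⟨g 0, hg 0 le_rfl, c 0, hc 0 le_rfl, ?_⟩
  intro t ht
  have hα := hc t ht
  have hβ := hc 0 le_rfl
  have hA := hg t ht
  have hB' := hg 0 le_rfl
  set x := Real.exp (-(c t)) with hx
  set y := Real.exp (-(c 0)) with hy
  set A := g t
  set B := g 0 * Real.exp (cbar * t) with hBdef
  have hBpos : 0 < B := mul_pos hB' (Real.exp_pos _)
  have hx1 : x < 1 := Real.exp_lt_one_iff.mpr (by linarith)
  have hy1 : y < 1 := Real.exp_lt_one_iff.mpr (by linarith)
  -- equations at T = 1 and T = 2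
  have h1 := heq t ht 1 one_pos
  have h2 := heq t ht 2 two_pos
  have h01 := heq 0 le_rfl 1 one_pos
  have h02 := heq 0 le_rfl 2 two_pos
  rw [mul_zero, Real.exp_zero] at h01 h02
  simp only [mul_one] at h1 h01 h02
  have e1 : A * (x - 1) = B * (y - 1) := by
    rw [hBdef]
    have : -(a 1) = g 0 * (y - 1) := h01.symm
    rw [h1, this]; ring
  have hx2 : Real.exp (-(c t) * 2) = x ^ 2 := by
    rw [hx, ← Real.exp_nat_mul]; norm_num; ring_nf
  have hy2 : Real.exp (-(c 0) * 2) = y ^ 2 := by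
    rw [hy, ← Real.exp_nat_mul]; norm_num; ring_nf
  have e2 : A * (x ^ 2 - 1) = B * (y ^ 2 - 1) := by
    rw [hBdef]
    have : -(a 2) = g 0 * (y ^ 2 - 1) := by rw [← h02, hy2]
    rw [hx2] at h2
    rw [h2, this]; ring
  have key : B * (y - 1) * (y - x) = 0 := by linear_combination (x + 1) * e1 - e2
  have hxy : y = x := by
    rcases mul_eq_zero.mp key with h | h
    · rcases mul_eq_zero.mp h with h | h
      · exact absurd h (ne_of_gt hBpos)
      · linarith
    · linarith
  have hc0 : c t = c 0 := by
    have := Real.exp_injective (hxy.symm.trans rfl : Real.exp (-(c t)) = Real.exp (-(c 0))).symm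
    have h := Real.exp_injective (hy ▸ hx ▸ hxy : Real.exp (-(c 0)) = Real.exp (-(c t)))
    linarith [neg_inj.mp h]
  refine ⟨?_, hc0⟩
  have hne : x - 1 ≠ 0 := by intro h; linarith
  have : A * (x - 1) = B * (x - 1) := by rw [e1, hxy]
  have := mul_right_cancel₀ hne this
  exact this
end

section
/- Functional equation splitting (CRDI-CRDI case): if g, a : (0,∞) → ℝ and c : (0,∞) → ℝ with g > 0, a > 0, c > 0, and there is a constant c̄ < 0 such that g(t)·T^{c(t)} = a(T)·t^{c̄} for all t, T > 0, then there exist constants k > 0 and c̃ > 0 with g(t) = k·t^{c̄} and c(t) = c̃ for all t > 0. -/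
theorem functional_splitting_crdi_crdi (g a c : ℝ → ℝ) (cbar : ℝ) (hcbar : cbar < 0)
    (hg : ∀ t > (0:ℝ), 0 < g t) (hc : ∀ t > (0:ℝ), 0 < c t)
    (ha : ∀ T > (0:ℝ), 0 < a T)
    (heq : ∀ t > (0:ℝ), ∀ T > (0:ℝ), g t * T ^ (c t) = a T * t ^ cbar) :
    ∃ k > (0:ℝ), ∃ ctil > (0:ℝ),
      ∀ t > (0:ℝ), g t = k * t ^ cbar ∧ c t = ctil := by
  have hgt : ∀ t > (0:ℝ), g t = a 1 * t ^ cbar := by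
    intro t ht
    have := heq t ht 1 one_pos
    simpa [Real.one_rpow] using this
  have hct : ∀ t > (0:ℝ), c t = c 1 := by
    intro t ht
    have key : ∀ s > (0:ℝ), a 1 * Real.exp (c s) = a (Real.exp 1) := by
      intro s hs
      have h := heq s hs (Real.exp 1) (Real.exp_pos 1)
      rw [hgt s hs, Real.exp_one_rpow] at h
      have hsp : (0:ℝ) < s ^ cbar := Real.rpow_pos_of_pos hs cbar
      have : a 1 * s ^ cbar * Real.exp (c s) = a (Real.exp 1) * s ^ cbar := by
        linarith [h]
      field_simp at this
      nlinarith [this, hsp, Real.exp_pos (c s), ha (Real.exp 1) (Real.exp_pos 1)]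
    have h1 := key t ht
    have h2 := key 1 one_pos
    have ha1 := ha 1 one_pos
    have : Real.exp (c t) = Real.exp (c 1) := by
      have := h1.trans h2.symm
      exact mul_left_cancel₀ (ne_of_gt ha1) this
    exact Real.exp_injective this
  exact ⟨a 1, ha 1 one_pos, c 1, hc 1 one_pos, fun t ht => ⟨hgt t ht, hct t ht⟩⟩
end

section
/- Functional equation splitting (CADI-CRDI case): if g : ℝ → ℝ and a : (0,∞) → ℝ with a > 0, g > 0, and constants c̄ < 0 and a function c : ℝ → (0,∞) satisfy a(T)·e^{c̄·t} = g(t)·T^{c(t)} for all t ≥ 0 and T > 0, then there exist constants k > 0 and c̃ > 0 such that g(t) = k·e^{c̄·t} and c(t) = c̃ for all t. -/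
theorem functional_splitting_cadi_crdi (g a c : ℝ → ℝ) (cbar : ℝ) (hcbar : cbar < 0)
    (hg : ∀ t ≥ (0:ℝ), 0 < g t) (hc : ∀ t ≥ (0:ℝ), 0 < c t)
    (ha : ∀ T > (0:ℝ), 0 < a T)
    (heq : ∀ t ≥ (0:ℝ), ∀ T > (0:ℝ),
      a T * Real.exp (cbar * t) = g t * T ^ (c t)) :
    ∃ k > (0:ℝ), ∃ ctil > (0:ℝ),
      ∀ t ≥ (0:ℝ), g t = k * Real.exp (cbar * t) ∧ c t = ctil := by
  refine ⟨a 1, ha 1 one_pos, c 0, hc 0 le_rfl, fun t ht => ?_⟩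
  have hgt : g t = a 1 * Real.exp (cbar * t) := by
    have h1 := heq t ht 1 one_pos
    rw [Real.one_rpow, mul_one] at h1
    linarith
  refine ⟨hgt, ?_⟩
  -- use T = e
  have he : (0:ℝ) < Real.exp 1 := Real.exp_pos 1
  have key : ∀ s ≥ (0:ℝ), Real.exp (c s) = a (Real.exp 1) / a 1 := by
    intro s hs
    have h := heq s hs (Real.exp 1) he
    have hgs : g s = a 1 * Real.exp (cbar * s) := by
      have h1 := heq s hs 1 one_pos
      rw [Real.one_rpow, mul_one] at h1
      linarith
    rw [hgs] at h
    have hrw : (Real.exp 1) ^ (c s) = Real.exp (c s) := by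
      rw [Real.rpow_def_of_pos he, Real.log_exp, one_mul]
    rw [hrw] at h
    rw [eq_div_iff (ha 1 one_pos).ne']
    nlinarith [Real.exp_pos (cbar * s)]
  have := (key t ht).trans (key 0 le_rfl).symm
  exact Real.exp_injective this
end
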